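/- Let m, n ≥ 1 with m ≠ n, let r be a nonzero integer, and let q ∈ ℂ be nonzero with q² ≠ 1, q^{2r} ≠ 1, and q^{r(m−n)} ≠ 1. Then the set of vectors (x_0, …, x_{m+n−1}) ∈ ℂ^{m+n} satisfying ∑_{i=0}^{m+n−1} x_i · [r·A_{i,j}] = 0 for every j ∈ {1, …, m+n−1} is a one-dimensional linear subspace of ℂ^{m+n}, spanned by the nonzero vector (β_{0,r}, …, β_{m+n−1,r}). -/

import Mathlib

/-- The affine Cartan matrix `Â` of `ŝl(m|n)` with standard parity: entry `A_{i,j}`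
for indices `i, j` read modulo `m+n`. -/
def cartanA (m n i j : ℕ) : ℤ :=
  if i % (m + n) = j % (m + n) then
    (if i % (m + n) = 0 ∨ i % (m + n) = m then 0
     else if i % (m + n) < m then 2 else -2)
  else if j % (m + n) = (i + 1) % (m + n) then (if i % (m + n) < m then -1 else 1)
  else if i % (m + n) = (j + 1) % (m + n) then (if j % (m + n) < m then -1 else 1)
  else 0

/-- The `q`-integer `[k] = (q^k - q^{-k})/(q - q⁻¹)`. -/
noncomputable def qint (q : ℂ) (k : ℤ) : ℂ := (q ^ k - q ^ (-k)) / (q - q⁻¹)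

/-- `β_{i,r} = (q^{(m-n-i)r} + q^{ir})/(q^r - q^{-r})` for `0 ≤ i ≤ m`, and
`β_{i,r} = (q^{(i-m-n)r} + q^{(2m-i)r})/(q^r - q^{-r})` for `m+1 ≤ i ≤ m+n-1`. -/
noncomputable def beta (m n : ℕ) (q : ℂ) (r : ℤ) (i : ℕ) : ℂ :=
  if i ≤ m then
    (q ^ (((m : ℤ) - n - i) * r) + q ^ ((i : ℤ) * r)) / (q ^ r - q ^ (-r))
  else
    (q ^ (((i : ℤ) - m - n) * r) + q ^ ((2 * (m : ℤ) - i) * r)) / (q ^ r - q ^ (-r))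

private lemma qint_zero (q : ℂ) : qint q 0 = 0 := by simp [qint]

private lemma qint_neg (q : ℂ) (k : ℤ) : qint q (-k) = - qint q k := by
  simp only [qint, neg_neg, ← neg_div]; ring_nf

private lemma qint_two (q : ℂ) (hq : q ≠ 0) (r : ℤ) :
    qint q (2 * r) = (q ^ r + q ^ (-r)) * qint q r := by
  have h1 : q ^ (2 * r) = q ^ r * q ^ r := by rw [two_mul, zpow_add₀ hq]
  have h2 : q ^ (-(2 * r)) = q ^ (-r) * q ^ (-r) := by
    rw [show -(2*r) = -r + -r by ring, zpow_add₀ hq]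
  simp only [qint, h1, h2, ← mul_div_assoc]
  congr 1; ring

private lemma qint_r_ne (q : ℂ) (hq : q ≠ 0) (hq2 : q ^ (2:ℕ) ≠ 1) (r : ℤ)
    (hq2r : q ^ (2 * r) ≠ 1) : qint q r ≠ 0 := by
  have hden : q - q⁻¹ ≠ 0 := by
    intro h
    apply hq2
    have : q = q⁻¹ := by linear_combination h
    calc q ^ (2:ℕ) = q * q := sq q
    _ = q * q⁻¹ := by rw [← this]
    _ = 1 := mul_inv_cancel₀ hq
  have hnum : q ^ r - q ^ (-r) ≠ 0 := by
    intro h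
    apply hq2r
    have : q ^ r = q ^ (-r) := by linear_combination h
    calc q ^ (2*r) = q ^ r * q ^ r := by rw [two_mul, zpow_add₀ hq]
    _ = q ^ r * q ^ (-r) := by rw [← this]
    _ = 1 := by rw [← zpow_add₀ hq]; simp
  exact div_ne_zero hnum hden

private lemma cartan_prev (m n j : ℕ) (h1 : 1 ≤ j) (h2 : j < m + n) :
    cartanA m n (j-1) j = if j - 1 < m then -1 else 1 := by
  have e1 : (j-1) % (m+n) = j - 1 := Nat.mod_eq_of_lt (by omega)
  have e2 : j % (m+n) = j := Nat.mod_eq_of_lt h2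
  have e3 : (j - 1 + 1) = j := by omega
  simp only [cartanA, e1, e2, e3]
  rw [if_neg (by omega : ¬ (j - 1 = j))]
  simp

private lemma cartan_diag (m n j : ℕ) (h1 : 1 ≤ j) (h2 : j < m + n) :
    cartanA m n j j = if j = m then 0 else if j < m then 2 else -2 := by
  have e2 : j % (m+n) = j := Nat.mod_eq_of_lt h2
  simp only [cartanA, e2]
  by_cases hjm : j = m
  · simp [hjm]
  · rw [if_pos trivial, if_neg (by omega), if_neg hjm]

private lemma cartan_next (m n j : ℕ) (h1 : 1 ≤ j) (h2 : j < m + n) (hp3 : 3 ≤ m + n) :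
    cartanA m n ((j+1) % (m+n)) j = if j < m then -1 else 1 := by
  have e2 : j % (m+n) = j := Nat.mod_eq_of_lt h2
  rcases Nat.lt_or_ge (j+1) (m+n) with h | h
  · have e1 : (j+1) % (m+n) = j+1 := Nat.mod_eq_of_lt h
    simp only [cartanA, e1, e2]
    rw [if_neg (by omega : ¬ (j + 1 = j))]
    have hc2 : ¬ (j = (j + 1 + 1) % (m+n)) := by
      rcases Nat.lt_or_ge (j+2) (m+n) with h' | h'
      · rw [Nat.mod_eq_of_lt h']; omega
      · have hh : j + 2 = m + n := by omega
        rw [show j + 1 + 1 = m + n from hh, Nat.mod_self]; omega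
    rw [if_neg hc2]
    simp
  · have hjp : j + 1 = m + n := by omega
    have e1 : (j+1) % (m+n) = 0 := by rw [hjp, Nat.mod_self]
    simp only [cartanA, e1, e2, Nat.zero_mod]
    rw [if_neg (by omega : ¬ ((0:ℕ) = j)),
      if_neg (by rw [Nat.mod_eq_of_lt (by omega : 0 + 1 < m + n)]; omega),
      if_pos trivial]

private lemma cartan_zero (m n i j : ℕ) (h1 : 1 ≤ j) (h2 : j < m + n) (hi : i < m + n)
    (d1 : i ≠ j - 1) (d2 : i ≠ j) (d3 : i ≠ (j+1) % (m+n)) : cartanA m n i j = 0 := by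
  have e1 : i % (m+n) = i := Nat.mod_eq_of_lt hi
  have e2 : j % (m+n) = j := Nat.mod_eq_of_lt h2
  simp only [cartanA, e1, e2]
  rw [if_neg d2, if_neg, if_neg d3]
  rcases Nat.lt_or_ge (i+1) (m+n) with h | h
  · rw [Nat.mod_eq_of_lt h]; omega
  · have hh : i + 1 = m + n := by omega
    rw [hh, Nat.mod_self]; omega

private lemma sum_reduce (m n : ℕ) (hp3 : 3 ≤ m+n) (x : Fin (m+n) → ℂ) (f : ℤ → ℂ)
    (hf0 : f 0 = 0) (j : ℕ) (h1 : 1 ≤ j) (h2 : j < m+n) :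
    ∑ i : Fin (m+n), x i * f (cartanA m n i.val j)
      = x ⟨j-1, by omega⟩ * f (cartanA m n (j-1) j) + x ⟨j, h2⟩ * f (cartanA m n j j)
        + x ⟨(j+1)%(m+n), Nat.mod_lt _ (by omega)⟩ * f (cartanA m n ((j+1)%(m+n)) j) := by
  have hp0 : 0 < m + n := by omega
  set i1 : Fin (m+n) := ⟨j-1, by omega⟩ with hi1
  set i2 : Fin (m+n) := ⟨j, h2⟩ with hi2
  set i3 : Fin (m+n) := ⟨(j+1)%(m+n), Nat.mod_lt _ hp0⟩ with hi3
  have hj1 : (j+1) % (m+n) ≠ j - 1 := by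
    rcases Nat.lt_or_ge (j+1) (m+n) with h | h
    · rw [Nat.mod_eq_of_lt h]; omega
    · rw [show j + 1 = m + n by omega, Nat.mod_self]; omega
  have hj2 : (j+1) % (m+n) ≠ j := by
    rcases Nat.lt_or_ge (j+1) (m+n) with h | h
    · rw [Nat.mod_eq_of_lt h]; omega
    · rw [show j + 1 = m + n by omega, Nat.mod_self]; omega
  have h12 : i1 ≠ i2 := by simp [hi1, hi2, Fin.ext_iff]; omega
  have h13 : i1 ≠ i3 := by simp [hi1, hi3, Fin.ext_iff]; omega
  have h23 : i2 ≠ i3 := by simp [hi2, hi3, Fin.ext_iff]; omega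
  have key : ∑ i ∈ ({i1, i2, i3} : Finset (Fin (m+n))), x i * f (cartanA m n i.val j)
      = ∑ i : Fin (m+n), x i * f (cartanA m n i.val j) := by
    apply Finset.sum_subset (Finset.subset_univ _)
    intro i _ hi
    simp only [Finset.mem_insert, Finset.mem_singleton, not_or] at hi
    obtain ⟨hd1, hd2, hd3⟩ := hi
    rw [cartan_zero m n i.val j h1 h2 i.isLt (fun h => hd1 (Fin.ext h))
      (fun h => hd2 (Fin.ext h)) (fun h => hd3 (Fin.ext h)), hf0, mul_zero]
  rw [← key]
  rw [Finset.sum_insert (by simp [h12, h13]), Finset.sum_insert (by simp [h23]),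
    Finset.sum_singleton, add_assoc]

private lemma eq_iff_rec (m n : ℕ) (hm : 1 ≤ m) (hp3 : 3 ≤ m + n)
    (r : ℤ) (q : ℂ) (hq : q ≠ 0) (hq2 : q ^ (2:ℕ) ≠ 1) (hq2r : q ^ (2*r) ≠ 1)
    (x : Fin (m+n) → ℂ) (j : ℕ) (h1 : 1 ≤ j) (h2 : j < m + n) :
    (∑ i : Fin (m+n), x i * qint q (r * cartanA m n i.val j) = 0)
      ↔ (if j = m then x ⟨j-1, by omega⟩ = x ⟨(j+1)%(m+n), Nat.mod_lt _ (by omega)⟩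
         else x ⟨j-1, by omega⟩ + x ⟨(j+1)%(m+n), Nat.mod_lt _ (by omega)⟩
              = (q ^ r + q ^ (-r)) * x ⟨j, h2⟩) := by
  have ht := qint_r_ne q hq hq2 r hq2r
  set t := qint q r with htdef
  set c := q ^ r + q ^ (-r) with hcdef
  rw [sum_reduce m n hp3 x (fun k => qint q (r * k)) (by simp [qint_zero]) j h1 h2]
  rw [cartan_prev m n j h1 h2, cartan_diag m n j h1 h2, cartan_next m n j h1 h2 hp3]
  set u := x ⟨j-1, by omega⟩
  set v := x ⟨j, h2⟩
  set w := x ⟨(j+1)%(m+n), Nat.mod_lt _ (by omega)⟩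
  rcases lt_trichotomy j m with hj | hj | hj
  · rw [if_pos (by omega : j - 1 < m), if_neg (by omega : ¬ j = m), if_pos hj,
      if_neg (by omega : ¬ j = m), if_pos hj]
    have e1 : qint q (r * -1) = -t := by rw [mul_neg_one, qint_neg]
    have e2 : qint q (r * 2) = c * t := by rw [mul_comm, qint_two q hq r]
    rw [e1, e2]
    constructor
    · intro hE
      have h3 : t * (u + w - c * v) = 0 := by linear_combination -hE
      rcases mul_eq_zero.mp h3 with h4 | h4
      · exact absurd h4 ht
      · linear_combination h4
    · intro hE; linear_combination (-t) * hE
  · rw [if_pos (by omega : j - 1 < m), if_pos hj, if_neg (by omega : ¬ j < m), if_pos hj]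
    have e1 : qint q (r * -1) = -t := by rw [mul_neg_one, qint_neg]
    have e2 : qint q (r * 0) = 0 := by rw [mul_zero, qint_zero]
    have e3 : qint q (r * 1) = t := by rw [mul_one]
    rw [e1, e2, e3]
    constructor
    · intro hE
      have h3 : t * (w - u) = 0 := by linear_combination hE
      rcases mul_eq_zero.mp h3 with h4 | h4
      · exact absurd h4 ht
      · linear_combination -h4
    · intro hE; linear_combination (-t) * hE
  · rw [if_neg (by omega : ¬ j - 1 < m), if_neg (by omega : ¬ j = m),
      if_neg (by omega : ¬ j < m), if_neg (by omega : ¬ j = m), if_neg (by omega : ¬ j < m)]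
    have e1 : qint q (r * 1) = t := by rw [mul_one]
    have e2 : qint q (r * -2) = -(c * t) := by
      rw [show r * -2 = -(2 * r) by ring, qint_neg, qint_two q hq r]
    rw [e1, e2]
    constructor
    · intro hE
      have h3 : t * (u + w - c * v) = 0 := by linear_combination hE
      rcases mul_eq_zero.mp h3 with h4 | h4
      · exact absurd h4 ht
      · linear_combination h4
    · intro hE; linear_combination t * hE

private lemma qpowr (q : ℂ) (r k : ℤ) : q ^ (k * r) = (q ^ r) ^ k := by
  rw [mul_comm, zpow_mul]

private lemma beta_form1 (m n : ℕ) (q : ℂ) (r : ℤ) (i : ℕ) (h : i ≤ m) :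
    beta m n q r i
      = ((q^r) ^ ((m:ℤ) - n - i) + (q^r) ^ (i:ℤ)) / (q^r - (q^r)⁻¹) := by
  rw [beta, if_pos h, qpowr, qpowr, zpow_neg]

private lemma beta_form2 (m n : ℕ) (q : ℂ) (r : ℤ) (i : ℕ) (h : m ≤ i) :
    beta m n q r i
      = ((q^r) ^ ((i:ℤ) - m - n) + (q^r) ^ (2*(m:ℤ) - i)) / (q^r - (q^r)⁻¹) := by
  rcases eq_or_lt_of_le h with h' | h'
  · subst h'
    rw [beta, if_pos le_rfl, qpowr, qpowr, zpow_neg,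
      show (m:ℤ) - n - m = (m:ℤ) - m - n by ring, show 2*(m:ℤ) - m = (m:ℤ) by ring]
  · rw [beta, if_neg (by omega), qpowr, qpowr, zpow_neg]

private lemma rec3 (a S T d : ℂ) (ha : a ≠ 0) :
    (S * a * a + T) / d + (S + T * a * a) / d = (a + a⁻¹) * ((S * a + T * a) / d) := by
  rw [← add_div, ← mul_div_assoc]
  congr 1
  field_simp
  ring

private lemma rec3' (a S T d : ℂ) (ha : a ≠ 0) :
    (S + T * a * a) / d + (S * a * a + T) / d = (a + a⁻¹) * ((S * a + T * a) / d) := by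
  rw [add_comm]; exact rec3 a S T d ha

private lemma beta_rec (m n : ℕ) (q : ℂ) (hq : q ≠ 0) (r : ℤ) (j : ℕ)
    (h2 : j + 2 ≤ m + n) (h3 : j + 1 ≠ m) :
    beta m n q r j + beta m n q r (j+2)
      = (q^r + (q^r)⁻¹) * beta m n q r (j+1) := by
  set a := q ^ r with hadef
  have ha : a ≠ 0 := zpow_ne_zero _ hq
  rcases Nat.lt_or_ge (j+1) m with hc | hc
  · rw [beta_form1 m n q r j (by omega), beta_form1 m n q r (j+1) (by omega),
      beta_form1 m n q r (j+2) (by omega)]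
    rw [show ((j+1:ℕ):ℤ) = (j:ℤ)+1 by push_cast; ring,
      show ((j+2:ℕ):ℤ) = (j:ℤ)+2 by push_cast; ring]
    rw [show (m:ℤ) - n - (j:ℤ) = ((m:ℤ) - n - (j:ℤ) - 2) + 1 + 1 by ring,
      show (m:ℤ) - n - ((j:ℤ)+1) = ((m:ℤ) - n - (j:ℤ) - 2) + 1 by ring,
      show (m:ℤ) - n - ((j:ℤ)+2) = ((m:ℤ) - n - (j:ℤ) - 2) by ring,
      show (j:ℤ) + 2 = (j:ℤ) + 1 + 1 by ring]
    simp only [← hadef, zpow_add_one₀ ha]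
    exact rec3 a _ _ _ ha
  · rw [beta_form2 m n q r j (by omega), beta_form2 m n q r (j+1) (by omega),
      beta_form2 m n q r (j+2) (by omega)]
    rw [show ((j+1:ℕ):ℤ) = (j:ℤ)+1 by push_cast; ring,
      show ((j+2:ℕ):ℤ) = (j:ℤ)+2 by push_cast; ring]
    rw [show ((j:ℤ)+1) - m - n = ((j:ℤ) - m - n) + 1 by ring,
      show ((j:ℤ)+2) - m - n = ((j:ℤ) - m - n) + 1 + 1 by ring,
      show 2*(m:ℤ) - (j:ℤ) = (2*(m:ℤ) - (j:ℤ) - 2) + 1 + 1 by ring,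
      show 2*(m:ℤ) - ((j:ℤ)+1) = (2*(m:ℤ) - (j:ℤ) - 2) + 1 by ring,
      show 2*(m:ℤ) - ((j:ℤ)+2) = (2*(m:ℤ) - (j:ℤ) - 2) by ring]
    simp only [← hadef, zpow_add_one₀ ha]
    exact rec3' a _ _ _ ha

private lemma beta_wrap (m n : ℕ) (hm : 1 ≤ m) (hn : 1 ≤ n) (q : ℂ) (r : ℤ) :
    beta m n q r (m+n) = beta m n q r 0 := by
  rw [beta_form2 m n q r (m+n) (by omega), beta_form1 m n q r 0 (by omega)]
  rw [show ((m+n:ℕ):ℤ) = (m:ℤ)+n by push_cast; ring, show ((0:ℕ):ℤ) = 0 by rfl]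
  rw [show (m:ℤ)+n - m - n = 0 by ring, show 2*(m:ℤ) - ((m:ℤ)+n) = (m:ℤ) - n - 0 by ring]
  rw [add_comm]

private lemma beta_cross (m n : ℕ) (hm : 1 ≤ m) (hn : 1 ≤ n) (q : ℂ) (r : ℤ) :
    beta m n q r (m-1) = beta m n q r (m+1) := by
  rw [beta_form1 m n q r (m-1) (by omega), beta_form2 m n q r (m+1) (by omega)]
  rw [show ((m-1:ℕ):ℤ) = (m:ℤ)-1 by push_cast [Nat.cast_sub hm]; ring,
    show ((m+1:ℕ):ℤ) = (m:ℤ)+1 by push_cast; ring]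
  rw [show (m:ℤ) - n - ((m:ℤ)-1) = 1 - (n:ℤ) by ring,
    show (m:ℤ)+1 - m - n = 1 - (n:ℤ) by ring,
    show 2*(m:ℤ) - ((m:ℤ)+1) = (m:ℤ)-1 by ring]

private lemma zrec (a u v : ℂ) (ha : a ≠ 0) (k : ℤ) :
    (u * a^k + v * a^(-k)) + (u * a^(k+2) + v * a^(-(k+2)))
      = (a + a⁻¹) * (u * a^(k+1) + v * a^(-(k+1))) := by
  have ht : a ^ k ≠ 0 := zpow_ne_zero _ ha
  rw [zpow_neg, zpow_neg, zpow_neg, show k+2 = k+1+1 by ring,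
    zpow_add_one₀ ha, zpow_add_one₀ ha]
  field_simp
  ring
/-- The solution set of `∑_{i=0}^{m+n-1} x_i [r A_{i,j}] = 0`, `j ∈ {1, …, m+n-1}`,
is the one-dimensional subspace of `ℂ^{m+n}` spanned by the nonzero vector
`(β_{0,r}, …, β_{m+n-1,r})`. -/
theorem solution_space_spanned_by_beta (m n : ℕ) (hm : 1 ≤ m) (hn : 1 ≤ n) (hmn : m ≠ n)
    (r : ℤ) (hr : r ≠ 0) (q : ℂ) (hq : q ≠ 0) (hq2 : q ^ 2 ≠ 1)
    (hq2r : q ^ (2 * r) ≠ 1) (hqmn : q ^ (r * ((m : ℤ) - n)) ≠ 1) :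
    (fun i : Fin (m + n) => beta m n q r i.val) ≠ 0
    ∧ ∀ x : Fin (m + n) → ℂ,
        (∀ j : Fin (m + n), j.val ≠ 0 →
          ∑ i : Fin (m + n), x i * qint q (r * cartanA m n i.val j.val) = 0)
        ↔ ∃ c : ℂ, x = c • fun i : Fin (m + n) => beta m n q r i.val := by
  have hp3 : 3 ≤ m + n := by omega
  set a := q ^ r with hadef
  have ha : a ≠ 0 := zpow_ne_zero _ hq
  have ha2 : a * a ≠ 1 := by
    intro h; apply hq2r; rw [two_mul, zpow_add₀ hq]; exact h
  have had : a - a⁻¹ ≠ 0 := by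
    intro h
    apply ha2
    have h' : a = a⁻¹ := by linear_combination h
    calc a * a = a * a⁻¹ := by rw [← h']
    _ = 1 := mul_inv_cancel₀ ha
  have hamn : a ^ ((m:ℤ) - n) ≠ 1 := by
    rw [hadef, ← qpowr]; rwa [mul_comm] at hqmn
  have hzm : ∀ (s t : ℤ), a ^ s * a ^ t = a ^ (s + t) := fun s t => (zpow_add₀ ha s t).symm
  constructor
  · -- the beta vector is nonzero
    intro hzero
    have h0 : beta m n q r 0 = 0 := by
      have := congrFun hzero ⟨0, by omega⟩
      simpa using this
    have h1 : beta m n q r 1 = 0 := by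
      have := congrFun hzero ⟨1, by omega⟩
      simpa using this
    rw [beta_form1 m n q r 0 (by omega)] at h0
    rw [beta_form1 m n q r 1 hm] at h1
    rw [div_eq_zero_iff] at h0 h1
    replace h0 := h0.resolve_right had
    replace h1 := h1.resolve_right had
    rw [show ((0:ℕ):ℤ) = 0 by rfl, zpow_zero] at h0
    rw [show ((1:ℕ):ℤ) = 1 by rfl, zpow_one] at h1
    -- h0 : a^(m-n-0) + 1 = 0, h1 : a^(m-n-1) + a = 0
    apply ha2
    have e1 : a ^ ((m:ℤ) - n - 1) * a ^ (1:ℤ) = a ^ ((m:ℤ) - n - 0) := by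
      rw [hzm]; congr 1; ring
    rw [zpow_one] at e1
    linear_combination (-1:ℂ) * h0 + a * h1 - e1
  · -- characterization of the solution space
    intro x
    have hq2' : q ^ (2:ℕ) ≠ 1 := hq2
    set X : ℕ → ℂ := fun k => x ⟨k % (m+n), Nat.mod_lt _ (by omega)⟩ with hXdef
    have hXeq : ∀ (k : ℕ) (h : k < m+n), X k = x ⟨k, h⟩ := by
      intro k h
      simp only [hXdef]
      congr 1
      exact Fin.ext (Nat.mod_eq_of_lt h)
    have hXwrap : X (m+n) = X 0 := by
      simp only [hXdef, Nat.mod_self, Nat.zero_mod]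
    constructor
    · -- solution → scalar multiple of beta
      intro hsol
      have hrec : ∀ j, 1 ≤ j → j < m + n → j ≠ m →
          X (j-1) + X (j+1) = (a + a⁻¹) * X j := by
        intro j h1 h2 hjm
        have hE := hsol ⟨j, h2⟩ (show j ≠ 0 by omega)
        rw [eq_iff_rec m n hm hp3 r q hq hq2' hq2r x j h1 h2, if_neg hjm] at hE
        rw [hXeq (j-1) (by omega), hXeq j h2]
        rw [show X (j+1) = x ⟨(j+1)%(m+n), Nat.mod_lt _ (by omega)⟩ from rfl]
        rw [zpow_neg] at hE
        exact hE
      have hcross : X (m-1) = X (m+1) := by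
        have hE := hsol ⟨m, by omega⟩ (show m ≠ 0 by omega)
        rw [eq_iff_rec m n hm hp3 r q hq hq2' hq2r x m hm (by omega), if_pos rfl] at hE
        rw [hXeq (m-1) (by omega)]
        rw [show X (m+1) = x ⟨(m+1)%(m+n), Nat.mod_lt _ (by omega)⟩ from rfl]
        exact hE
      have hdd : (a - a⁻¹) * (a - a⁻¹)⁻¹ = 1 := mul_inv_cancel₀ had
      set α : ℂ := (X 1 - a⁻¹ * X 0) / (a - a⁻¹) with hαdef
      set γ : ℂ := (a * X 0 - X 1) / (a - a⁻¹) with hγdef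
      have claim1 : ∀ j, j ≤ m → X j = α * a^(j:ℤ) + γ * a^(-(j:ℤ)) := by
        intro j
        induction j using Nat.strong_induction_on with
        | _ j ih =>
          intro hjm
          match j, ih with
          | 0, ih =>
            simp only [Nat.cast_zero, neg_zero, zpow_zero, mul_one]
            rw [hαdef, hγdef]
            linear_combination (-(X 0)) * hdd
          | 1, ih =>
            simp only [Nat.cast_one, zpow_one, zpow_neg_one]
            rw [hαdef, hγdef]
            linear_combination (-(X 1)) * hdd
          | (j+2), ih =>
            have hE := hrec (j+1) (by omega) (by omega) (by omega)
            rw [Nat.add_sub_cancel] at hE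
            rw [ih j (by omega) (by omega), ih (j+1) (by omega) (by omega)] at hE
            rw [show ((j+1:ℕ):ℤ) = (j:ℤ)+1 by push_cast; ring] at hE
            rw [show ((j+2:ℕ):ℤ) = (j:ℤ)+2 by push_cast; ring]
            linear_combination hE - zrec a α γ ha (j:ℤ)
      set u : ℂ := γ * a^(-(2*(m:ℤ))) with hudef
      set v : ℂ := α * a^(2*(m:ℤ)) with hvdef
      have claim2 : ∀ j, m ≤ j → j ≤ m + n → X j = u * a^(j:ℤ) + v * a^(-(j:ℤ)) := by
        intro j
        induction j using Nat.strong_induction_on with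
        | _ j ih =>
          intro hmj hjp
          by_cases hb0 : j = m
          · subst hb0
            rw [claim1 j le_rfl, hudef, hvdef]
            rw [mul_assoc, mul_assoc, hzm, hzm]
            rw [show -(2*(j:ℤ)) + j = -(j:ℤ) by ring, show 2*(j:ℤ) + -(j:ℤ) = (j:ℤ) by ring]
            ring
          · by_cases hb1 : j = m + 1
            · subst hb1
              have h1 : X (m+1) = X (m-1) := hcross.symm
              rw [h1, claim1 (m-1) (by omega), hudef, hvdef]
              rw [mul_assoc, mul_assoc, hzm, hzm]
              rw [show ((m-1:ℕ):ℤ) = (m:ℤ)-1 by push_cast [Nat.cast_sub hm]; ring,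
                show ((m+1:ℕ):ℤ) = (m:ℤ)+1 by push_cast; ring]
              rw [show -(2*(m:ℤ)) + ((m:ℤ)+1) = -((m:ℤ)-1) by ring,
                show 2*(m:ℤ) + -((m:ℤ)+1) = (m:ℤ)-1 by ring]
              ring
            · have hj2 : m + 2 ≤ j := by omega
              have hE := hrec (j-1) (by omega) (by omega) (by omega)
              rw [show j - 1 - 1 = j - 2 by omega, show j - 1 + 1 = j by omega] at hE
              rw [ih (j-2) (by omega) (by omega) (by omega),
                ih (j-1) (by omega) (by omega) (by omega)] at hE
              rw [show ((j-2:ℕ):ℤ) = (j:ℤ)-2 by push_cast [Nat.cast_sub (by omega : 2 ≤ j)]; ring,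
                show ((j-1:ℕ):ℤ) = (j:ℤ)-1 by push_cast [Nat.cast_sub (by omega : 1 ≤ j)]; ring] at hE
              have hz := zrec a u v ha ((j:ℤ)-2)
              rw [show (j:ℤ)-2+2 = (j:ℤ) by ring, show (j:ℤ)-2+1 = (j:ℤ)-1 by ring] at hz
              linear_combination hE - hz
      -- the wrap-around constraint
      have hwrap := claim2 (m+n) (by omega) le_rfl
      rw [hXwrap, claim1 0 (by omega)] at hwrap
      rw [show ((0:ℕ):ℤ) = 0 by rfl, neg_zero, zpow_zero, mul_one, mul_one] at hwrap
      rw [hudef, hvdef, mul_assoc, mul_assoc, hzm, hzm] at hwrap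
      rw [show -(2*(m:ℤ)) + ((m+n:ℕ):ℤ) = (n:ℤ)-m by push_cast; ring,
        show 2*(m:ℤ) + -((m+n:ℕ):ℤ) = (m:ℤ)-n by push_cast; ring] at hwrap
      -- hwrap : α + γ = γ * a^(n-m) + α * a^(m-n)
      have hinv : a^((n:ℤ)-m) * a^((m:ℤ)-n) = 1 := by
        rw [hzm, show (n:ℤ)-m + ((m:ℤ)-n) = 0 by ring, zpow_zero]
      have hkey : (a^((m:ℤ)-n) - 1) * (α - γ * a^((n:ℤ)-m)) = 0 := by
        linear_combination (-1 : ℂ) * hwrap + (-γ) * hinv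
      have hαγ : α = γ * a^((n:ℤ)-m) := by
        rcases mul_eq_zero.mp hkey with h | h
        · exact absurd (by linear_combination h) hamn
        · linear_combination h
      have hγα : γ = α * a^((m:ℤ)-n) := by
        linear_combination (-(a^((m:ℤ)-n))) * hαγ + (-γ) * hinv
      refine ⟨α * (a - a⁻¹), ?_⟩
      funext i
      have hxi : x i = X i.val := (hXeq i.val i.isLt).symm
      simp only [Pi.smul_apply, smul_eq_mul]
      have hdiv : ∀ N : ℂ, α * (a - a⁻¹) * (N / (a - a⁻¹)) = α * N := by
        intro N
        rw [mul_assoc, ← mul_div_assoc, mul_div_cancel_left₀ N had]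
      rcases le_or_gt i.val m with hi | hi
      · rw [hxi, claim1 i.val hi, beta_form1 m n q r i.val hi, ← hadef, hdiv, hγα]
        rw [mul_assoc, hzm, show ((m:ℤ)-n) + -(i.val:ℤ) = (m:ℤ)-n-i.val by ring]
        ring
      · rw [hxi, claim2 i.val (by omega) (by omega), beta_form2 m n q r i.val (by omega),
          ← hadef, hdiv, hudef, hvdef, hγα]
        have e1 : a^((m:ℤ)-n) * a^(-(2*(m:ℤ))) * a^((i.val:ℤ)) = a^(((i.val):ℤ)-m-n) := by
          rw [mul_assoc, hzm, hzm]; congr 1; ring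
        have e2 : a^(2*(m:ℤ)) * a^(-((i.val):ℤ)) = a^(2*(m:ℤ)-(i.val)) := hzm _ _
        linear_combination α * e1 + α * e2
    · -- scalar multiple of beta → solution
      rintro ⟨c, hc⟩
      subst hc
      intro j hj0
      have h1 : 1 ≤ j.val := by omega
      have h2 : j.val < m + n := j.isLt
      rw [eq_iff_rec m n hm hp3 r q hq hq2' hq2r _ j.val h1 h2]
      simp only [Pi.smul_apply, smul_eq_mul]
      have hmodeq : ∀ k : ℕ, k ≤ m + n → beta m n q r (k % (m+n)) = beta m n q r k := by
        intro k hk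
        rcases Nat.lt_or_ge k (m+n) with h | h
        · rw [Nat.mod_eq_of_lt h]
        · have : k = m + n := by omega
          subst this
          rw [Nat.mod_self, beta_wrap m n hm hn q r]
      by_cases hjm : j.val = m
      · rw [if_pos hjm]
        congr 1
        rw [show ((j.val + 1) % (m+n)) = ((m+1) % (m+n)) by rw [hjm]]
        rw [hmodeq (m+1) (by omega), hjm]
        exact beta_cross m n hm hn q r
      · rw [if_neg hjm]
        have hB := beta_rec m n q hq r (j.val - 1) (by omega) (by omega)
        rw [show j.val - 1 + 2 = j.val + 1 by omega, show j.val - 1 + 1 = j.val by omega] at hB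
        rw [← zpow_neg] at hB
        rw [hmodeq (j.val + 1) (by omega)]
        linear_combination c * hB
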